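/- arXiv:1603.06469 — 3 statements merged into one kernel-verified Lean document; each statement's English description precedes it below -/
import Mathlib

section
/- Let s, d be positive integers and let w ≥ 3 be an odd integer with gcd(s, d, w) = 1. Assume moreover that if w = 3 then 3 does not divide s. Then the arithmetic progression {s + d·i : 0 ≤ i ≤ (w−3)/2} contains at least one element coprime to w. -/
/-!
Strong induction on `w`. Write `w = p * m` with `p` the least prime factor of `w`, and let
`s + d * i` with `i ≤ (m - 3) / 2` be coprime to `m` by induction. If `p` divides `s + d * i`,
then `p` divides neither `d` (as `p ∤ s`) nor `m`, so `p` does not divide `s + d * (i + m)`, which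
is still coprime to `m`; since `p ≥ 3`, the index `i + m` stays within `(w - 3) / 2`.
-/

namespace Nat

theorem coprime_mul_or_coprime_add_mul {p m x : ℕ} (d : ℕ) (hp : p.Prime) (hx : Coprime x m)
    (hpxdm : ¬ (p ∣ x ∧ p ∣ d * m)) : Coprime x (p * m) ∨ Coprime (x + d * m) (p * m) := by
  by_cases hpx : p ∣ x
  · right
    have hp_not_dvd : ¬ p ∣ x + d * m := fun h => hpxdm ⟨hpx, (Nat.dvd_add_right hpx).mp h⟩
    exact ((hp.coprime_iff_not_dvd.mpr hp_not_dvd).symm).mul_right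
      ((coprime_add_mul_right_left x m d).mpr hx)
  · exact Or.inl ((hp.coprime_iff_not_dvd.mpr hpx).symm.mul_right hx)

theorem three_le_minFac_of_odd {w : ℕ} (hw : Odd w) (hw1 : w ≠ 1) : 3 ≤ w.minFac := by
  have h2 : w.minFac ≠ 2 := fun h => hw.not_two_dvd_nat (h ▸ minFac_dvd w)
  have := (minFac_prime hw1).two_le
  omega

theorem exists_coprime_add_mul_le {w : ℕ} (hw : Odd w) (s d : ℕ) (hgcd : gcd (gcd s d) w = 1)
    (h3 : w = 3 → ¬ 3 ∣ s) : ∃ i ≤ (w - 3) / 2, Coprime (s + d * i) w := by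
  induction w using Nat.strong_induction_on with
  | _ w ih =>
  obtain rfl | hw1 := eq_or_ne w 1
  · exact ⟨0, le_rfl, coprime_one_right _⟩
  obtain rfl | hw3 := eq_or_ne w 3
  · exact ⟨0, le_rfl, by simpa using (prime_three.coprime_iff_not_dvd.mpr (h3 rfl)).symm⟩
  set p := w.minFac
  have hp : p.Prime := minFac_prime hw1
  have hp3 : 3 ≤ p := three_le_minFac_of_odd hw hw1
  obtain ⟨m, hwm⟩ : p ∣ w := minFac_dvd w
  have hm : Odd m := (odd_mul.mp (hwm ▸ hw)).2
  have hm0 : 0 < m := hm.pos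
  have hm_dvd : m ∣ w := Dvd.intro_left p hwm.symm
  have hmw : 3 * m ≤ w := hwm ▸ mul_le_mul_right m hp3
  have hps : p ∣ s → ¬ p ∣ d := fun hs hd =>
    hp.one_lt.ne' (eq_one_of_dvd_coprimes hgcd (dvd_gcd hs hd) (minFac_dvd w))
  by_cases hm3 : m = 3 ∧ 3 ∣ s
  · -- the induction hypothesis does not apply to `m = 3`, but then `3 ∣ w` forces `w = 9`
    obtain ⟨rfl, h3s⟩ := hm3
    have hp_eq : p = 3 := le_antisymm (minFac_le_of_dvd (by norm_num) hm_dvd) hp3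
    have h3d : ¬ 3 ∣ d := hp_eq ▸ hps (hp_eq ▸ h3s)
    have h3sd : Coprime (s + d * 1) 3 :=
      (prime_three.coprime_iff_not_dvd.mpr (by rwa [mul_one, Nat.dvd_add_right h3s])).symm
    exact ⟨1, by omega, by rw [hwm, hp_eq]; exact h3sd.mul_right h3sd⟩
  obtain ⟨i, hi, hcop⟩ := ih m (by omega) hm (Coprime.coprime_dvd_right hm_dvd hgcd)
    (fun h h' => hm3 ⟨h, h'⟩)
  have hpx : ¬ (p ∣ s + d * i ∧ p ∣ d * m) := by
    rintro ⟨hpx, hpdm⟩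
    rcases hp.dvd_mul.mp hpdm with hpd | hpm
    · exact hps ((Nat.dvd_add_left (hpd.mul_right i)).mp hpx) hpd
    · exact hp.one_lt.ne' (eq_one_of_dvd_coprimes hcop hpx hpm)
  rcases coprime_mul_or_coprime_add_mul d hp hcop hpx with h | h
  · exact ⟨i, by omega, hwm ▸ h⟩
  · refine ⟨i + m, ?_, by rwa [hwm, mul_add, ← add_assoc]⟩
    have := odd_iff.mp hw
    have := odd_iff.mp hm
    omega

end Nat

theorem arithmetic_progression_has_coprime_element_general
    (s d w : ℕ) (hwodd : Odd w)
    (hgcd : Nat.gcd (Nat.gcd s d) w = 1)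
    (h3 : w = 3 → ¬ (3 ∣ s)) :
    ∃ i ≤ (w - 3) / 2, Nat.Coprime (s + d * i) w :=
  Nat.exists_coprime_add_mul_le hwodd s d hgcd h3

theorem arithmetic_progression_has_coprime_element
    (s d w : ℕ) (hs : 0 < s) (hd : 0 < d) (hw : 3 ≤ w) (hwodd : Odd w)
    (hgcd : Nat.gcd (Nat.gcd s d) w = 1)
    (h3 : w = 3 → ¬ (3 ∣ s)) :
    ∃ i ≤ (w - 3) / 2, Nat.Coprime (s + d * i) w :=
  arithmetic_progression_has_coprime_element_general s d w hwodd hgcd h3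
end

section
/- Let m be odd, let t ≥ 0, and consider the set of pairs A = {(m(2t+1−2j), 2m(t+1+j)−2) : 0 ≤ j ≤ t} ∪ {(2m(t−j)−2, m(2t+3+2j)) : 0 ≤ j ≤ t−1}. Then the set of positive differences {b − a : (a,b) ∈ A} equals (m − 2 + 4m·{0,…,t}) ∪ (3m + 2 + 4m·{0,…,t−1}), and the set of all endpoints of pairs in A equals (2m − 2 + 2m·{0,…,2t}) ∪ (m + 2m·{0,…,2t}). -/
theorem A_differences_and_endpoints (m t : ℕ) (hm : Odd m) (hm3 : 3 ≤ m) :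
    ((fun p : ℕ × ℕ => p.2 - p.1) ''
        (((fun j => (m * (2 * t + 1 - 2 * j), 2 * m * (t + 1 + j) - 2)) '' (Set.Iic t)) ∪
         ((fun j => (2 * m * (t - j) - 2, m * (2 * t + 3 + 2 * j))) '' (Set.Iio t))))
      = ((fun j => m - 2 + 4 * m * j) '' (Set.Iic t)) ∪
        ((fun j => 3 * m + 2 + 4 * m * j) '' (Set.Iio t)) ∧
    {x | ∃ p ∈ (((fun j => (m * (2 * t + 1 - 2 * j), 2 * m * (t + 1 + j) - 2)) '' (Set.Iic t)) ∪
         ((fun j => (2 * m * (t - j) - 2, m * (2 * t + 3 + 2 * j))) '' (Set.Iio t))),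
        x = p.1 ∨ x = p.2}
      = ((fun i => 2 * m - 2 + 2 * m * i) '' (Set.Iic (2 * t))) ∪
        ((fun i => m + 2 * m * i) '' (Set.Iic (2 * t))) := by
  constructor
  · rw [Set.image_union, ← Set.image_comp, ← Set.image_comp]
    congr 1
    · apply Set.image_congr
      intro j hj
      simp only [Set.mem_Iic] at hj
      show 2 * m * (t + 1 + j) - 2 - m * (2 * t + 1 - 2 * j) = m - 2 + 4 * m * j
      obtain ⟨k, rfl⟩ := Nat.le.dest hj
      have h1 : 2 * (j + k) + 1 - 2 * j = 2 * k + 1 := by omega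
      rw [h1]
      have e1 : 2 * m * (j + k + 1 + j) = m * (2 * k + 1) + (m + 4 * (m * j)) := by ring
      have e2 : 4 * m * j = 4 * (m * j) := by ring
      omega
    · apply Set.image_congr
      intro j hj
      simp only [Set.mem_Iio] at hj
      show m * (2 * t + 3 + 2 * j) - (2 * m * (t - j) - 2) = 3 * m + 2 + 4 * m * j
      obtain ⟨k, rfl⟩ : ∃ k, t = j + 1 + k := ⟨t - j - 1, by omega⟩
      have h1 : j + 1 + k - j = k + 1 := by omega
      rw [h1]
      have e1 : m * (2 * (j + 1 + k) + 3 + 2 * j) = 2 * m * (k + 1) + (3 * m + 4 * (m * j)) := by ring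
      have e2 : 4 * m * j = 4 * (m * j) := by ring
      have e3 : 2 ≤ 2 * m * (k + 1) := by nlinarith
      omega
  · ext x
    simp only [Set.mem_setOf_eq, Set.mem_union, Set.mem_image, Set.mem_Iic, Set.mem_Iio]
    constructor
    · rintro ⟨p, ⟨j, hj, rfl⟩ | ⟨j, hj, rfl⟩, hx⟩
      · rcases hx with rfl | rfl
        · -- x = m * (2t+1-2j), j ≤ t ; use right branch with i = t - j
          right
          refine ⟨t - j, by omega, ?_⟩
          obtain ⟨k, rfl⟩ := Nat.le.dest hj
          have h1 : 2 * (j + k) + 1 - 2 * j = 2 * k + 1 := by omega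
          have h2 : j + k - j = k := by omega
          rw [h1, h2]; ring
        · -- x = 2m(t+1+j)-2 ; left branch with i = t + j
          left
          refine ⟨t + j, by omega, ?_⟩
          have e1 : 2 * m * (t + 1 + j) = 2 * m + 2 * m * (t + j) := by ring
          omega
      · rcases hx with rfl | rfl
        · -- x = 2m(t-j)-2, j < t ; left branch with i = t - 1 - j
          left
          refine ⟨t - 1 - j, by omega, ?_⟩
          obtain ⟨k, rfl⟩ : ∃ k, t = j + 1 + k := ⟨t - j - 1, by omega⟩
          have h1 : j + 1 + k - j = k + 1 := by omega
          have h2 : j + 1 + k - 1 - j = k := by omega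
          rw [h1, h2]
          have e1 : 2 * m * (k + 1) = 2 * m + 2 * m * k := by ring
          omega
        · -- x = m(2t+3+2j), j < t ; right branch with i = t + 1 + j
          right
          refine ⟨t + 1 + j, by omega, ?_⟩
          ring
    · rintro (⟨i, hi, rfl⟩ | ⟨i, hi, rfl⟩)
      · -- x = 2m-2+2mi
        by_cases h : t ≤ i
        · refine ⟨(m * (2 * t + 1 - 2 * (i - t)), 2 * m * (t + 1 + (i - t)) - 2),
            Or.inl ⟨i - t, by omega, rfl⟩, Or.inr ?_⟩
          have h1 : t + 1 + (i - t) = i + 1 := by omega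
          rw [h1]
          have e1 : 2 * m * (i + 1) = 2 * m + 2 * m * i := by ring
          omega
        · refine ⟨(2 * m * (t - (t - 1 - i)) - 2, m * (2 * t + 3 + 2 * (t - 1 - i))),
            Or.inr ⟨t - 1 - i, by omega, rfl⟩, Or.inl ?_⟩
          have h1 : t - (t - 1 - i) = i + 1 := by omega
          rw [h1]
          have e1 : 2 * m * (i + 1) = 2 * m + 2 * m * i := by ring
          omega
      · -- x = m + 2mi
        by_cases h : i ≤ t
        · refine ⟨(m * (2 * t + 1 - 2 * (t - i)), 2 * m * (t + 1 + (t - i)) - 2),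
            Or.inl ⟨t - i, by omega, rfl⟩, Or.inl ?_⟩
          have h1 : 2 * t + 1 - 2 * (t - i) = 2 * i + 1 := by omega
          rw [h1]; ring
        · refine ⟨(2 * m * (t - (i - t - 1)) - 2, m * (2 * t + 3 + 2 * (i - t - 1))),
            Or.inr ⟨i - t - 1, by omega, rfl⟩, Or.inr ?_⟩
          have h1 : 2 * t + 3 + 2 * (i - t - 1) = 2 * i + 1 := by omega
          rw [h1]; ring
end

section
/- Let m ≥ 2 and n ≥ 2 with m odd and n ≡ 2 (mod 4), and define the Hamiltonian-type cycle B = [0, mn/2 − 1, 1, mn/2 − 2, 2, …, mn/2 − (m−1)/2, (m−1)/2]_m in ℤ/(mn) (a closed trail with translation step m of the base sequence 0, mn/2−1, 1, mn/2−2, …, (m−1)/2). Then the base points 0, mn/2−1, 1, mn/2−2, 2, …, (m−1)/2 lie in pairwise distinct cosets of the subgroup m·ℤ/(mn), and the list of partial differences ∂B of B equals ±({mn/2 − 1 − 2i : 0 ≤ i ≤ (m−3)/2} ∪ {mn/2 − 1 − (2i+1) : 0 ≤ i ≤ (m−3)/2} ∪ {(m+1)/2}) as a subset of ℤ/(mn).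 -/
theorem cycle_B_cosets_and_partial_differences (m n : ℕ) (hm : Odd m)
    (hm2 : 2 ≤ m) (hn2 : 2 ≤ n) (hn : n % 4 = 2) :
    let c : ℕ → ZMod (m * n) := fun h =>
      if Even h then ((h / 2 : ℕ) : ZMod (m * n))
      else ((m * n / 2 - 1 - (h - 1) / 2 : ℕ) : ZMod (m * n))
    (∀ h₁ < m, ∀ h₂ < m,
        c h₁ - c h₂ ∈ AddSubgroup.zmultiples ((m : ℕ) : ZMod (m * n)) → h₁ = h₂) ∧
    ({y : ZMod (m * n) | (∃ h ≤ m - 2, y = c (h + 1) - c h ∨ y = -(c (h + 1) - c h)) ∨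
        y = c 0 + (m : ZMod (m * n)) - c (m - 1) ∨
        y = -(c 0 + (m : ZMod (m * n)) - c (m - 1))}
      = {y : ZMod (m * n) | ∃ x ∈
          ((fun i => m * n / 2 - 1 - 2 * i) '' (Set.Iic ((m - 3) / 2))) ∪
          ((fun i => m * n / 2 - 1 - (2 * i + 1)) '' (Set.Iic ((m - 3) / 2))) ∪
          {(m + 1) / 2},
          y = ((x : ℕ) : ZMod (m * n)) ∨ y = -((x : ℕ) : ZMod (m * n))}) := by
  intro c
  obtain ⟨k, hk⟩ := hm
  have hk1 : 1 ≤ k := by omega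
  have hM : m * n / 2 = m * (n / 2) := Nat.mul_div_assoc m (by omega : 2 ∣ n)
  have hMge : 2 * k + 1 ≤ m * n / 2 := by
    have h1 : 1 ≤ n / 2 := by omega
    have := Nat.mul_le_mul_left m h1
    omega
  set M := m * n / 2 with hMdef
  -- values of c
  have hceven : ∀ i : ℕ, c (2 * i) = ((i : ℕ) : ZMod (m * n)) := by
    intro i
    simp [c, even_two_mul]
  have hcodd : ∀ i : ℕ, c (2 * i + 1) = ((M - 1 - i : ℕ) : ZMod (m * n)) := by
    intro i
    have : ¬ Even (2 * i + 1) := by simp [Nat.even_add_one, even_two_mul]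
    simp only [c, this, if_false]
    congr 1
    omega
  constructor
  · -- cosets part
    intro h₁ hh₁ h₂ hh₂ hmem
    rw [AddSubgroup.mem_zmultiples_iff] at hmem
    obtain ⟨z, hz⟩ := hmem
    have hdvd : m ∣ m * n := Dvd.intro n rfl
    have : NeZero m := ⟨by omega⟩
    let φ : ZMod (m * n) →+* ZMod m := ZMod.castHom hdvd (ZMod m)
    have hφm : φ ((m : ℕ) : ZMod (m * n)) = 0 := by
      simp [φ, map_natCast]
    have key : φ (c h₁) = φ (c h₂) := by
      have h2 := congrArg φ hz
      rw [map_zsmul, hφm, smul_zero, map_sub] at h2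
      exact sub_eq_zero.mp h2.symm
    -- natural value of c h in ZMod m
    have hval : ∀ h < m, ∃ v < m, φ (c h) = ((v : ℕ) : ZMod m) ∧
        ((Even h ∧ v = h / 2) ∨ (¬ Even h ∧ v = m - (h + 1) / 2)) := by
      intro h hh
      rcases Nat.even_or_odd h with he | ho
      · obtain ⟨i, hi⟩ := id he
        have hi' : h = 2 * (h / 2) := by omega
        refine ⟨h / 2, by omega, ?_, Or.inl ⟨he, rfl⟩⟩
        conv_lhs => rw [hi']
        rw [hceven, map_natCast]
      · obtain ⟨i, hi⟩ := ho
        subst hi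
        refine ⟨m - (2 * i + 1 + 1) / 2, by omega, ?_,
          Or.inr ⟨by simp [parity_simps], rfl⟩⟩
        rw [hcodd, map_natCast]
        have h1 : i + 1 ≤ M := by omega
        have e1 : (M - 1 - i : ℕ) = M - (i + 1) := by omega
        rw [e1, Nat.cast_sub h1]
        have hMm : ((M : ℕ) : ZMod m) = 0 := by rw [hM]; simp
        rw [hMm, zero_sub]
        have e2 : (m - (2 * i + 1 + 1) / 2 : ℕ) = m - (i + 1) := by omega
        rw [e2, Nat.cast_sub (by omega), ZMod.natCast_self, zero_sub]
    obtain ⟨v₁, hv₁, he₁, hc₁⟩ := hval h₁ hh₁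
    obtain ⟨v₂, hv₂, he₂, hc₂⟩ := hval h₂ hh₂
    rw [he₁, he₂] at key
    have hveq : v₁ = v₂ := by
      have := congrArg ZMod.val key
      rwa [ZMod.val_natCast_of_lt hv₁, ZMod.val_natCast_of_lt hv₂] at this
    -- now conclude h₁ = h₂
    rcases hc₁ with ⟨p₁, e₁⟩ | ⟨p₁, e₁⟩ <;> rcases hc₂ with ⟨p₂, e₂⟩ | ⟨p₂, e₂⟩
    · obtain ⟨a, ha⟩ := p₁; obtain ⟨b, hb⟩ := p₂; omega
    · -- even, odd: v₁ = h₁/2 ≤ k, v₂ = m - (h₂+1)/2 ≥ k+1, contradiction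
      rw [Nat.not_even_iff] at p₂
      obtain ⟨a, ha⟩ := p₁
      omega
    · rw [Nat.not_even_iff] at p₁
      obtain ⟨b, hb⟩ := p₂
      omega
    · rw [Nat.not_even_iff] at p₁
      rw [Nat.not_even_iff] at p₂
      omega
  · -- partial differences
    have hdeven : ∀ i, i < k → c (2 * i + 1) - c (2 * i) = ((M - 1 - 2 * i : ℕ) : ZMod (m * n)) := by
      intro i hi
      rw [hceven, hcodd]
      rw [← Nat.cast_sub (by omega)]
      congr 1
      omega
    have hdodd : ∀ i, i < k →
        c (2 * i + 1 + 1) - c (2 * i + 1) = -((M - 1 - (2 * i + 1) : ℕ) : ZMod (m * n)) := by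
      intro i hi
      have : 2 * i + 1 + 1 = 2 * (i + 1) := by ring
      rw [this, hceven, hcodd, ← neg_sub, ← Nat.cast_sub (by omega)]
      congr 2
      omega
    have hwrap : c 0 + (m : ZMod (m * n)) - c (m - 1)
        = (((m + 1) / 2 : ℕ) : ZMod (m * n)) := by
      have h0 : c 0 = 0 := by simpa using hceven 0
      have h1 : (m - 1 : ℕ) = 2 * k := by omega
      rw [h0, h1, hceven, zero_add, ← Nat.cast_sub (by omega : k ≤ m)]
      congr 1
      omega
    have hk3 : (m - 3) / 2 = k - 1 := by omega
    have hm1 : m - 2 = 2 * k - 1 := by omega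
    ext y
    simp only [Set.mem_setOf_eq, Set.mem_union, Set.mem_image, Set.mem_Iic,
      Set.mem_singleton_iff]
    constructor
    · rintro (⟨h, hh, hy⟩ | hy)
      · rcases Nat.even_or_odd h with ⟨i, hi⟩ | ⟨i, hi⟩
        · -- h = 2i
          have hi' : h = 2 * i := by omega
          subst hi'
          have hik : i < k := by omega
          refine ⟨M - 1 - 2 * i, Or.inl (Or.inl ⟨i, by omega, rfl⟩), ?_⟩
          have hd := hdeven i hik
          rcases hy with hy | hy
          · exact Or.inl (by rw [hy, hd])
          · exact Or.inr (by rw [hy, hd])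
        · subst hi
          have hik : i < k := by omega
          refine ⟨M - 1 - (2 * i + 1), Or.inl (Or.inr ⟨i, by omega, rfl⟩), ?_⟩
          have hd := hdodd i hik
          rcases hy with hy | hy
          · exact Or.inr (by rw [hy, hd])
          · exact Or.inl (by rw [hy, hd, neg_neg])
      · exact ⟨(m + 1) / 2, Or.inr rfl, by
          rcases hy with hy | hy
          · exact Or.inl (by rw [hy, hwrap])
          · exact Or.inr (by rw [hy, hwrap])⟩
    · rintro ⟨x, ((⟨i, hi, rfl⟩ | ⟨i, hi, rfl⟩) | rfl), hy⟩
      · have hik : i < k := by omega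
        refine Or.inl ⟨2 * i, by omega, ?_⟩
        have hd := hdeven i hik
        rcases hy with hy | hy
        · exact Or.inl (by rw [hy, hd])
        · exact Or.inr (by rw [hy, hd])
      · have hik : i < k := by omega
        refine Or.inl ⟨2 * i + 1, by omega, ?_⟩
        have hd := hdodd i hik
        rcases hy with hy | hy
        · exact Or.inr (by rw [hy, hd, neg_neg])
        · exact Or.inl (by rw [hy, hd])
      · refine Or.inr ?_
        rcases hy with hy | hy
        · exact Or.inl (by rw [hy, hwrap])
        · exact Or.inr (by rw [hy, hwrap])
end
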